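/- arXiv:2311.15526 — 4 statements merged into one kernel-verified Lean document; each statement's English description precedes it below -/
import Mathlib

section
/- Let u : ℝ² → ℝ be continuously differentiable. Define the vector field 𝔭u : ℝ² → ℝ² by (𝔭u)(x) = (∫₀¹ t·u(tx) dt) · x^⊥, where x = (x₁,x₂) and x^⊥ = (−x₂, x₁). Then 𝔭u is differentiable on ℝ² and its scalar curl recovers u: for every x ∈ ℝ², ∂(𝔭u)₂/∂x₁(x) − ∂(𝔭u)₁/∂x₂(x) = u(x). -/
open MeasureTheory Metric

/-- The Poincaré operator: `(𝔭u)(x) = (∫₀¹ t·u(tx) dt) • x^⊥` with `x^⊥ = (-x₂, x₁)`. -/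
noncomputable def poincareOp (u : ℝ × ℝ → ℝ) (x : ℝ × ℝ) : ℝ × ℝ :=
  (∫ t in (0:ℝ)..1, t * u (t • x)) • (-x.2, x.1)

private lemma smul_fderiv_eq (u : ℝ × ℝ → ℝ) (t : ℝ) (z : ℝ × ℝ) :
    t • ((fderiv ℝ u z).comp (t • ContinuousLinearMap.id ℝ (ℝ × ℝ)))
      = (t ^ 2) • fderiv ℝ u z := by
  refine ContinuousLinearMap.ext fun v => ?_
  simp [ContinuousLinearMap.smul_apply, ContinuousLinearMap.comp_apply,
    ContinuousLinearMap.map_smul, smul_eq_mul]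
  ring

private lemma hasFDerivAt_comp_smul (u : ℝ × ℝ → ℝ) (hu : ContDiff ℝ 1 u) (t : ℝ) (x : ℝ × ℝ) :
    HasFDerivAt (fun y : ℝ × ℝ => t * u (t • y)) ((t ^ 2) • fderiv ℝ u (t • x)) x := by
  have hL : HasFDerivAt (fun y : ℝ × ℝ => t • y) (t • ContinuousLinearMap.id ℝ (ℝ × ℝ)) x :=
    (t • ContinuousLinearMap.id ℝ (ℝ × ℝ)).hasFDerivAt
  have hud : HasFDerivAt u (fderiv ℝ u (t • x)) (t • x) :=
    (hu.differentiable one_ne_zero (t • x)).hasFDerivAt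
  have h1 : HasFDerivAt (fun y : ℝ × ℝ => u (t • y))
      ((fderiv ℝ u (t • x)).comp (t • ContinuousLinearMap.id ℝ (ℝ × ℝ))) x := hud.comp x hL
  have := h1.const_mul t
  rwa [smul_fderiv_eq u t (t • x)] at this

private lemma hasFDerivAt_scaleInt (u : ℝ × ℝ → ℝ) (hu : ContDiff ℝ 1 u) (x₀ : ℝ × ℝ) :
    HasFDerivAt (fun x : ℝ × ℝ => ∫ t in (0:ℝ)..1, t * u (t • x))
      (∫ t in (0:ℝ)..1, (t ^ 2) • fderiv ℝ u (t • x₀)) x₀ := by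
  have hu' : Continuous (fderiv ℝ u) := hu.continuous_fderiv one_ne_zero
  obtain ⟨C, hC⟩ : ∃ C, ∀ z ∈ closedBall (0 : ℝ × ℝ) (‖x₀‖ + 1), ‖fderiv ℝ u z‖ ≤ C :=
    (isCompact_closedBall _ _).exists_bound_of_continuousOn hu'.continuousOn
  have hC0 : (0 : ℝ) ≤ C := le_trans (norm_nonneg _)
    (hC 0 (mem_closedBall_self (by positivity)))
  apply hasFDerivAt_integral_of_dominated_of_fderiv_le''
    (F := fun x t => t * u (t • x))
    (F' := fun x t => (t ^ 2) • fderiv ℝ u (t • x)) (bound := fun _ => C)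
    (ball_mem_nhds x₀ one_pos)
  · filter_upwards with x
    exact (continuous_id.mul (hu.continuous.comp (continuous_id.smul
      continuous_const))).aestronglyMeasurable
  · exact (continuous_id.mul (hu.continuous.comp (continuous_id.smul
      continuous_const))).intervalIntegrable 0 1
  · exact ((continuous_pow 2).smul (hu'.comp (continuous_id.smul
      continuous_const))).aestronglyMeasurable
  · filter_upwards [ae_restrict_mem measurableSet_uIoc] with t ht x hx
    rw [Set.uIoc_of_le zero_le_one] at ht
    have ht0 : 0 < t := ht.1
    have ht1 : t ≤ 1 := ht.2
    have hxle : ‖x‖ ≤ ‖x₀‖ + 1 := by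
      have := norm_sub_norm_le x x₀
      have hxlt : ‖x - x₀‖ < 1 := by rwa [mem_ball, dist_eq_norm] at hx
      linarith
    have hz : t • x ∈ closedBall (0 : ℝ × ℝ) (‖x₀‖ + 1) := by
      rw [mem_closedBall, dist_zero_right, norm_smul, Real.norm_eq_abs,
        abs_of_pos ht0]
      nlinarith [norm_nonneg x]
    calc ‖(t ^ 2) • fderiv ℝ u (t • x)‖ = t ^ 2 * ‖fderiv ℝ u (t • x)‖ := by
          rw [norm_smul, Real.norm_eq_abs, abs_of_nonneg (by positivity)]
      _ ≤ 1 * C := by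
          apply mul_le_mul _ (hC _ hz) (norm_nonneg _) zero_le_one
          nlinarith
      _ = C := one_mul C
  · exact intervalIntegrable_const
  · filter_upwards with t x _
    exact hasFDerivAt_comp_smul u hu t x

/-- If `u` is continuously differentiable on `ℝ²`, then `𝔭u` is differentiable and its
scalar curl `∂(𝔭u)₂/∂x₁ − ∂(𝔭u)₁/∂x₂` recovers `u`. -/
theorem poincareOp_differentiable_and_curl (u : ℝ × ℝ → ℝ) (hu : ContDiff ℝ 1 u) :
    Differentiable ℝ (poincareOp u) ∧
      ∀ x : ℝ × ℝ,
        fderiv ℝ (fun y => (poincareOp u y).2) x (1, 0)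
          - fderiv ℝ (fun y => (poincareOp u y).1) x (0, 1) = u x := by
  have hu' : Continuous (fderiv ℝ u) := hu.continuous_fderiv one_ne_zero
  set S : ℝ × ℝ → ℝ := fun x => ∫ t in (0:ℝ)..1, t * u (t • x) with hSdef
  set D : ℝ × ℝ → (ℝ × ℝ) →L[ℝ] ℝ :=
    fun x => ∫ t in (0:ℝ)..1, (t ^ 2) • fderiv ℝ u (t • x) with hDdef
  have hS : ∀ x, HasFDerivAt S (D x) x := fun x => hasFDerivAt_scaleInt u hu x
  constructor
  · intro x
    exact ((hS x).differentiableAt.smul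
      ((differentiable_snd.neg.prodMk differentiable_fst) x)).congr_of_eventuallyEq
      (Filter.Eventually.of_forall fun y => rfl)
  · intro x
    -- component functions
    have e2 : (fun y : ℝ × ℝ => (poincareOp u y).2) = fun y => S y * y.1 := by
      funext y; simp [poincareOp, hSdef]
    have e1 : (fun y : ℝ × ℝ => (poincareOp u y).1) = fun y => S y * (-y.2) := by
      funext y; simp [poincareOp, hSdef]
    have h2 : HasFDerivAt (fun y : ℝ × ℝ => S y * y.1)
        (S x • ContinuousLinearMap.fst ℝ ℝ ℝ + x.1 • D x) x :=
      (hS x).mul hasFDerivAt_fst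
    have h1 : HasFDerivAt (fun y : ℝ × ℝ => S y * (-y.2))
        (S x • (-(ContinuousLinearMap.snd ℝ ℝ ℝ)) + (-x.2) • D x) x :=
      (hS x).mul hasFDerivAt_snd.neg
    rw [e1, e2, h2.fderiv, h1.fderiv]
    simp only [ContinuousLinearMap.add_apply, ContinuousLinearMap.smul_apply,
      ContinuousLinearMap.coe_fst', ContinuousLinearMap.coe_snd',
      ContinuousLinearMap.neg_apply, smul_eq_mul]
    -- D x applied through the integral
    have I2 : IntervalIntegrable (fun t : ℝ => (t ^ 2) • fderiv ℝ u (t • x)) volume 0 1 :=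
      ((continuous_pow 2).smul (hu'.comp (continuous_id.smul
        continuous_const))).intervalIntegrable 0 1
    have hDapp : ∀ v : ℝ × ℝ, D x v = ∫ t in (0:ℝ)..1, t ^ 2 * fderiv ℝ u (t • x) v := by
      intro v
      rw [hDdef, ContinuousLinearMap.intervalIntegral_apply I2 v]
      simp [smul_eq_mul]
    have hDx : x.1 * D x (1, 0) + x.2 * D x (0, 1) = D x x := by
      have : (x.1 • ((1:ℝ), (0:ℝ)) + x.2 • ((0:ℝ), (1:ℝ))) = x := by
        simp [Prod.ext_iff]
      conv_rhs => rw [← this]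
      rw [map_add, _root_.map_smul, _root_.map_smul]
      simp [smul_eq_mul]
    -- FTC : ∫ (2t u(tx) + t² u'(tx) x) dt = u x
    have hg : ∀ t : ℝ, HasDerivAt (fun s : ℝ => s ^ 2 * u (s • x))
        (2 * t * u (t • x) + t ^ 2 * fderiv ℝ u (t • x) x) t := by
      intro t
      have hsm : HasDerivAt (fun s : ℝ => s • x) ((1:ℝ) • x) t :=
        (hasDerivAt_id t).smul_const x
      have hud : HasFDerivAt u (fderiv ℝ u (t • x)) (t • x) :=
        (hu.differentiable one_ne_zero (t • x)).hasFDerivAt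
      have hc : HasDerivAt (fun s : ℝ => u (s • x)) (fderiv ℝ u (t • x) ((1:ℝ) • x)) t :=
        hud.comp_hasDerivAt t hsm
      have hpow : HasDerivAt (fun s : ℝ => s ^ 2) (2 * t) t := by
        simpa using hasDerivAt_pow 2 t
      have := hpow.mul hc
      simpa only [one_smul, Pi.mul_def] using this
    have hcont : Continuous (fun t : ℝ =>
        2 * t * u (t • x) + t ^ 2 * fderiv ℝ u (t • x) x) := by
      apply Continuous.add
      · exact (continuous_const.mul continuous_id).mul
          (hu.continuous.comp (continuous_id.smul continuous_const))
      · exact (continuous_pow 2).mul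
          ((hu'.comp (continuous_id.smul continuous_const)).clm_apply continuous_const)
    have hFTC : (∫ t in (0:ℝ)..1, (2 * t * u (t • x) + t ^ 2 * fderiv ℝ u (t • x) x)) = u x := by
      rw [intervalIntegral.integral_eq_sub_of_hasDerivAt (fun t _ => hg t)
        (hcont.intervalIntegrable 0 1)]
      simp
    have Ia : IntervalIntegrable (fun t : ℝ => 2 * t * u (t • x)) volume 0 1 :=
      ((continuous_const.mul continuous_id).mul
        (hu.continuous.comp (continuous_id.smul continuous_const))).intervalIntegrable 0 1
    have Ib : IntervalIntegrable (fun t : ℝ => t ^ 2 * fderiv ℝ u (t • x) x) volume 0 1 :=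
      ((continuous_pow 2).mul
        ((hu'.comp (continuous_id.smul continuous_const)).clm_apply
          continuous_const)).intervalIntegrable 0 1
    have hsplit : (∫ t in (0:ℝ)..1, (2 * t * u (t • x) + t ^ 2 * fderiv ℝ u (t • x) x))
        = 2 * S x + D x x := by
      rw [intervalIntegral.integral_add Ia Ib, hDapp x, hSdef]
      have h2S : (∫ t in (0:ℝ)..1, 2 * t * u (t • x))
          = 2 * ∫ t in (0:ℝ)..1, t * u (t • x) := by
        rw [← intervalIntegral.integral_const_mul]
        congr 1; funext t; ring
      rw [h2S]
    have key : 2 * S x + D x x = u x := by rw [← hsplit, hFTC]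
    rw [← hDx] at key
    ring_nf
    ring_nf at key
    linarith
end

section
/- Let B(x₁,x₂) = x₁·x₂·(1 − x₁ − x₂) be the product of the barycentric coordinates of the unit triangle. Then the Poincaré operator gives (𝔭B)(x₁,x₂) = (−x₂, x₁) · x₁x₂·(1/4 − (x₁+x₂)/5), which is a pair of polynomials of total degree 4; moreover 𝔭B does not belong to [P₂]² (the space of pairs of polynomials of total degree at most 2). Consequently, the subspace of (ℝ[x₁,x₂])² spanned by [P₂]² together with 𝔭B is a direct sum [P₂]² ⊕ span{𝔭B} and has dimension 13. -/
/-!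
Since `B(tx) = t²·x₁x₂ − t³·x₁x₂(x₁+x₂)`, the integrand `t·B(tx)` is a polynomial in `t` and the
moments `∫₀¹ t³ = 1/4`, `∫₀¹ t⁴ = 1/5` give `𝔭B` explicitly. Each component is a product of three
variables and the affine factor `1/4 − (x₁+x₂)/5`, all nonzero, so it has total degree 4 because
`ℝ[x₁,x₂]` is a domain. In particular `𝔭B ∉ [P₂]²`, so adding it to the
12-dimensional space `[P₂]²` (twice the 6 monomials of degree `≤ 2`) raises the dimension to 13.
-/

open MeasureTheory MvPolynomial

/-- Evaluation of a two-variable polynomial at a point of `ℝ²`. -/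
noncomputable def evalP (p : MvPolynomial (Fin 2) ℝ) (x : ℝ × ℝ) : ℝ :=
  MvPolynomial.eval ![x.1, x.2] p

/-- The bubble function `B(x₁,x₂) = x₁x₂(1 − x₁ − x₂)`. -/
noncomputable def bubble (x : ℝ × ℝ) : ℝ := x.1 * x.2 * (1 - x.1 - x.2)

/-- The polynomial `x₁x₂(1/4 − (x₁+x₂)/5)`. -/
noncomputable def bubbleFactor : MvPolynomial (Fin 2) ℝ :=
  X 0 * X 1 * (C (1/4 : ℝ) - (X 0 + X 1) * C (1/5 : ℝ))

/-- The pair of polynomials representing `𝔭B`, namely `(-x₂, x₁) · x₁x₂(1/4 − (x₁+x₂)/5)`. -/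
noncomputable def pB : MvPolynomial (Fin 2) ℝ × MvPolynomial (Fin 2) ℝ :=
  (-(X 1) * bubbleFactor, X 0 * bubbleFactor)

/-- The space `[P₂]²` of pairs of polynomials of total degree at most 2. -/
noncomputable def P2sq : Submodule ℝ (MvPolynomial (Fin 2) ℝ × MvPolynomial (Fin 2) ℝ) :=
  (restrictTotalDegree (Fin 2) ℝ 2).prod (restrictTotalDegree (Fin 2) ℝ 2)

namespace Submodule

variable {R M N : Type*} [Semiring R] [AddCommMonoid M] [AddCommMonoid N] [Module R M] [Module R N]

def prodEquiv (p : Submodule R M) (q : Submodule R N) : p.prod q ≃ₗ[R] p × q where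
  toFun x := (⟨x.1.1, x.2.1⟩, ⟨x.1.2, x.2.2⟩)
  invFun y := ⟨(y.1.1, y.2.1), y.1.2, y.2.2⟩
  left_inv _ := rfl
  right_inv _ := rfl
  map_add' _ _ := rfl
  map_smul' _ _ := rfl

instance (p : Submodule R M) (q : Submodule R N) [Module.Finite R p] [Module.Finite R q] :
    Module.Finite R (p.prod q) :=
  Module.Finite.equiv (prodEquiv p q).symm

theorem finrank_prod {K V W : Type*} [DivisionRing K] [AddCommGroup V] [AddCommGroup W]
    [Module K V] [Module K W] (p : Submodule K V) (q : Submodule K W)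
    [FiniteDimensional K p] [FiniteDimensional K q] :
    Module.finrank K (p.prod q) = Module.finrank K p + Module.finrank K q := by
  rw [(prodEquiv p q).finrank_eq, Module.finrank_prod]

theorem finrank_sup_span_singleton' {K V : Type*} [DivisionRing K] [AddCommGroup V] [Module K V]
    {s : Submodule K V} [FiniteDimensional K s] {x : V} (hx : x ∉ s) :
    Module.finrank K ↥(s ⊔ K ∙ x) = Module.finrank K s + 1 := by
  have hx0 : x ≠ 0 := fun h => hx (h ▸ s.zero_mem)
  have := finrank_sup_add_finrank_inf_eq s (K ∙ x)
  rwa [disjoint_iff.mp ((disjoint_span_singleton' hx0).mpr hx), finrank_bot, add_zero,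
    finrank_span_singleton hx0] at this

end Submodule

namespace MvPolynomial

theorem finrank_restrictTotalDegree (σ R : Type*) [CommSemiring R] [StrongRankCondition R]
    (m : ℕ) : Module.finrank R (restrictTotalDegree σ R m) =
      Nat.card {n : σ →₀ ℕ | (n.sum fun _ e => e) ≤ m} :=
  Module.finrank_eq_nat_card_basis (basisRestrictSupport R _)

theorem card_fin_two_degree_le_two :
    Nat.card {n : Fin 2 →₀ ℕ | (n.sum fun _ e => e) ≤ 2} = 6 := by
  let e : {n : Fin 2 →₀ ℕ | (n.sum fun _ e => e) ≤ 2} ≃ {p : ℕ × ℕ | p.1 + p.2 ≤ 2} :=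
    (Finsupp.equivFunOnFinite.trans (finTwoArrowEquiv ℕ)).subtypeEquiv fun n => by
      simp [Finsupp.sum_fintype, Fin.sum_univ_two]
  have hs : {p : ℕ × ℕ | p.1 + p.2 ≤ 2} =
      ↑((Finset.range 3 ×ˢ Finset.range 3).filter fun p => p.1 + p.2 ≤ 2) := by
    ext p
    simp only [Set.mem_ofPred_eq, Finset.coe_filter, Finset.mem_product, Finset.mem_range]
    omega
  rw [Nat.card_congr e, hs, Nat.card_coe_set_eq, Set.ncard_coe_finset]
  rfl

end MvPolynomial

instance : FiniteDimensional ℝ P2sq :=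
  inferInstanceAs (Module.Finite ℝ ((restrictTotalDegree (Fin 2) ℝ 2).prod _))

theorem finrank_P2sq : Module.finrank ℝ P2sq = 12 := by
  rw [P2sq, Submodule.finrank_prod, MvPolynomial.finrank_restrictTotalDegree,
    MvPolynomial.card_fin_two_degree_le_two]

theorem integral_mul_bubble_smul (x : ℝ × ℝ) :
    ∫ t in (0:ℝ)..1, t * bubble (t • x) = x.1 * x.2 * (1/4 - (x.1 + x.2)/5) := by
  have h : (fun t : ℝ => t * bubble (t • x))
      = fun t => x.1 * x.2 * t ^ 3 - x.1 * x.2 * (x.1 + x.2) * t ^ 4 := by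
    funext t; simp only [bubble, Prod.smul_fst, Prod.smul_snd, smul_eq_mul]; ring
  rw [h, intervalIntegral.integral_sub, intervalIntegral.integral_const_mul,
    intervalIntegral.integral_const_mul, integral_pow, integral_pow]
  · ring
  all_goals exact (intervalIntegral.intervalIntegrable_pow _).const_mul _

theorem poincareOp_bubble_eq (x : ℝ × ℝ) :
    poincareOp bubble x = (x.1 * x.2 * (1/4 - (x.1 + x.2)/5)) • (-x.2, x.1) := by
  rw [poincareOp, integral_mul_bubble_smul]

theorem poincareOp_bubble_eq_evalP (x : ℝ × ℝ) :
    poincareOp bubble x = (evalP pB.1 x, evalP pB.2 x) := by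
  simp only [poincareOp_bubble_eq, evalP, pB, bubbleFactor, Prod.smul_mk, smul_eq_mul, map_mul,
    map_sub, map_add, map_neg, eval_X, eval_C, Matrix.cons_val_zero, Matrix.cons_val_one,
    Prod.mk.injEq]
  constructor <;> ring

theorem totalDegree_linearFactor :
    (C (1/4) - (X 0 + X 1) * C (1/5) : MvPolynomial (Fin 2) ℝ).totalDegree = 1 := by
  set L : MvPolynomial (Fin 2) ℝ := C (1/4) - (X 0 + X 1) * C (1/5)
  refine le_antisymm ?_ (Nat.one_le_iff_ne_zero.mpr fun h => ?_)
  · refine (totalDegree_sub _ _).trans (max_le (by simp) ((totalDegree_mul _ _).trans ?_))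
    rw [totalDegree_C, add_zero]
    exact (totalDegree_add _ _).trans (by simp [totalDegree_X])
  · -- a constant polynomial takes the same value at `(0, 0)` and at `(1, 0)`
    have h0 : eval ![0, 0] L = 1/4 := by simp [L]
    have h1 : eval ![1, 0] L = 1/20 := by norm_num [L]
    rw [totalDegree_eq_zero_iff_eq_C.mp h, eval_C] at h0 h1
    norm_num [h0] at h1

theorem totalDegree_bubbleFactor : bubbleFactor.totalDegree = 3 := by
  have hL := totalDegree_linearFactor
  have hL0 : (C (1/4 : ℝ) - (X 0 + X 1) * C (1/5 : ℝ) : MvPolynomial (Fin 2) ℝ) ≠ 0 := by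
    rintro h; rw [h, totalDegree_zero] at hL; exact zero_ne_one hL
  rw [bubbleFactor, totalDegree_mul_of_isDomain (mul_ne_zero (X_ne_zero _) (X_ne_zero _)) hL0,
    totalDegree_mul_of_isDomain (X_ne_zero _) (X_ne_zero _), totalDegree_X, totalDegree_X, hL]

theorem bubbleFactor_ne_zero : bubbleFactor ≠ 0 := by
  intro h; simpa [h] using totalDegree_bubbleFactor

theorem totalDegree_pB_fst : pB.1.totalDegree = 4 := by
  rw [pB, neg_mul, totalDegree_neg,
    totalDegree_mul_of_isDomain (X_ne_zero _) bubbleFactor_ne_zero, totalDegree_X,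
    totalDegree_bubbleFactor]

theorem totalDegree_pB_snd : pB.2.totalDegree = 4 := by
  rw [pB, totalDegree_mul_of_isDomain (X_ne_zero _) bubbleFactor_ne_zero, totalDegree_X,
    totalDegree_bubbleFactor]

theorem pB_notMem_P2sq : pB ∉ P2sq := fun h => by
  have := (mem_restrictTotalDegree _ _ _).mp h.1
  rw [totalDegree_pB_fst] at this
  omega

/-- `𝔭B = (-x₂, x₁)·x₁x₂(1/4 − (x₁+x₂)/5)` is a pair of polynomials of total degree 4,
does not lie in `[P₂]²`, and `[P₂]² ⊕ span{𝔭B}` is a direct sum of dimension 13. -/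
theorem poincareOp_bubble :
    (∀ x : ℝ × ℝ, poincareOp bubble x = (evalP pB.1 x, evalP pB.2 x)) ∧
    (∀ x : ℝ × ℝ,
        poincareOp bubble x = (x.1 * x.2 * (1/4 - (x.1 + x.2)/5)) • (-x.2, x.1)) ∧
    pB.1.totalDegree = 4 ∧ pB.2.totalDegree = 4 ∧
    pB ∉ P2sq ∧
    Disjoint P2sq (Submodule.span ℝ {pB}) ∧
    Module.finrank ℝ ↥(P2sq ⊔ Submodule.span ℝ {pB}) = 13 := by
  have hpB : pB ≠ 0 := fun h => pB_notMem_P2sq (h ▸ P2sq.zero_mem)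
  refine ⟨poincareOp_bubble_eq_evalP, poincareOp_bubble_eq, totalDegree_pB_fst,
    totalDegree_pB_snd, pB_notMem_P2sq, (Submodule.disjoint_span_singleton' hpB).mpr pB_notMem_P2sq,
    ?_⟩
  rw [Submodule.finrank_sup_span_singleton' pB_notMem_P2sq, finrank_P2sq]
end

section
/- Fix k ∈ ℕ. There exists a constant C > 0 (depending only on k) such that for every h > 0 and every real polynomial w in two variables of total degree at most k, ∫_{hK̂} ‖∇w(x)‖² dx ≤ C · h⁻² · ∫_{hK̂} w(x)² dx, where ∇w denotes the gradient of the polynomial function w : ℝ² → ℝ. -/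
open MeasureTheory

/-- The open unit triangle `K̂ = {(x₁,x₂) : x₁ > 0, x₂ > 0, x₁ + x₂ < 1}`. -/
def unitTriangle : Set (ℝ × ℝ) := {x | 0 < x.1 ∧ 0 < x.2 ∧ x.1 + x.2 < 1}

/-- The dilation `h·S` of a subset `S` of `ℝ²`. -/
def dilate (h : ℝ) (S : Set (ℝ × ℝ)) : Set (ℝ × ℝ) := (fun x => h • x) '' S

open MvPolynomial

open MvPolynomial in
noncomputable def D (w : MvPolynomial (Fin 2) ℝ) (x : ℝ × ℝ) : ℝ × ℝ →L[ℝ] ℝ :=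
  (evalP (pderiv 0 w) x) • ContinuousLinearMap.fst ℝ ℝ ℝ +
  (evalP (pderiv 1 w) x) • ContinuousLinearMap.snd ℝ ℝ ℝ

open MvPolynomial in
lemma hasFDerivAt_evalP (w : MvPolynomial (Fin 2) ℝ) (x : ℝ × ℝ) :
    HasFDerivAt (evalP w) (D w x) x := by
  induction w using MvPolynomial.induction_on with
  | C a =>
      have : evalP (C a) = fun _ => a := by funext y; simp [evalP]
      rw [this]
      have h0 : D (C a) x = 0 := by
        simp [D, evalP]
      rw [h0]; exact hasFDerivAt_const _ _
  | add p q hp hq =>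
      have : evalP (p + q) = fun y => evalP p y + evalP q y := by funext y; simp [evalP]
      rw [this]
      have h0 : D (p + q) x = D p x + D q x := by
        simp [D, evalP]; module
      rw [h0]; exact (hp).add (hq)
  | mul_X p i hp =>
      fin_cases i
      · show HasFDerivAt (evalP (p * X 0)) (D (p * X 0) x) x
        have : evalP (p * X 0) = fun y => evalP p y * y.1 := by
          funext y; simp [evalP]
        rw [this]
        have hd := hp.mul (hasFDerivAt_fst (𝕜 := ℝ) (p := x))
        refine hd.congr_fderiv ?_
        refine ContinuousLinearMap.ext fun v => ?_
        simp [D, evalP, pderiv_mul]; ring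
      · show HasFDerivAt (evalP (p * X 1)) (D (p * X 1) x) x
        have : evalP (p * X 1) = fun y => evalP p y * y.2 := by
          funext y; simp [evalP]
        rw [this]
        have hd := hp.mul (hasFDerivAt_snd (𝕜 := ℝ) (p := x))
        refine hd.congr_fderiv ?_
        refine ContinuousLinearMap.ext fun v => ?_
        simp [D, evalP, pderiv_mul]; ring

lemma evalP_smul (c : ℝ) (p : MvPolynomial (Fin 2) ℝ) (x : ℝ × ℝ) :
    evalP (c • p) x = c * evalP p x := smul_eval _ _ _

lemma continuous_evalP (w : MvPolynomial (Fin 2) ℝ) : Continuous (evalP w) := by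
  have : evalP w = (fun v : Fin 2 → ℝ => MvPolynomial.eval v w) ∘ (fun x : ℝ × ℝ => ![x.1, x.2]) := rfl
  rw [this]
  refine (MvPolynomial.continuous_eval w).comp ?_
  refine continuous_pi fun i => ?_
  fin_cases i
  · exact continuous_fst
  · exact continuous_snd

lemma analyticOnNhd_evalP (w : MvPolynomial (Fin 2) ℝ) :
    AnalyticOnNhd ℝ (evalP w) Set.univ := by
  induction w using MvPolynomial.induction_on with
  | C a =>
      have : evalP (C a) = fun _ => a := by funext y; simp [evalP]
      rw [this]; exact analyticOnNhd_const
  | add p q hp hq =>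
      have : evalP (p + q) = fun y => evalP p y + evalP q y := by funext y; simp [evalP]
      rw [this]; exact hp.add hq
  | mul_X p i hp =>
      fin_cases i
      · show AnalyticOnNhd ℝ (evalP (p * X 0)) Set.univ
        have : evalP (p * X 0) = fun y => evalP p y * y.1 := by funext y; simp [evalP]
        rw [this]
        exact hp.mul ((ContinuousLinearMap.fst ℝ ℝ ℝ).analyticOnNhd _)
      · show AnalyticOnNhd ℝ (evalP (p * X 1)) Set.univ
        have : evalP (p * X 1) = fun y => evalP p y * y.2 := by funext y; simp [evalP]
        rw [this]
        exact hp.mul ((ContinuousLinearMap.snd ℝ ℝ ℝ).analyticOnNhd _)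

lemma isOpen_unitTriangle : IsOpen unitTriangle := by
  have h1 : IsOpen {x : ℝ × ℝ | 0 < x.1} := isOpen_lt continuous_const continuous_fst
  have h2 : IsOpen {x : ℝ × ℝ | 0 < x.2} := isOpen_lt continuous_const continuous_snd
  have h3 : IsOpen {x : ℝ × ℝ | x.1 + x.2 < 1} :=
    isOpen_lt (continuous_fst.add continuous_snd) continuous_const
  have : unitTriangle = {x : ℝ × ℝ | 0 < x.1} ∩ ({x : ℝ × ℝ | 0 < x.2} ∩ {x : ℝ × ℝ | x.1 + x.2 < 1}) := rfl
  rw [this]; exact h1.inter (h2.inter h3)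

lemma isBounded_unitTriangle : Bornology.IsBounded unitTriangle := by
  refine (Metric.isBounded_ball (x := (0:ℝ×ℝ)) (r := 2)).subset ?_
  rintro ⟨a, b⟩ ⟨ha, hb, hab⟩
  simp only [Metric.mem_ball, dist_zero_right, Prod.norm_def, Real.norm_eq_abs]
  rw [abs_of_pos ha, abs_of_pos hb]
  simp only [sup_lt_iff]
  constructor <;> linarith

lemma integrableOn_of_continuous {f : ℝ × ℝ → ℝ} (hf : Continuous f) {s : Set (ℝ × ℝ)}
    (hs : Bornology.IsBounded s) : IntegrableOn f s volume :=
  ((hf.continuousOn).integrableOn_compact hs.isCompact_closure).mono_set subset_closure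

lemma eq_zero_of_vanish {w : MvPolynomial (Fin 2) ℝ}
    (hz : ∀ x ∈ unitTriangle, evalP w x = 0) : w = 0 := by
  have hana := analyticOnNhd_evalP w
  have hm : ((1:ℝ)/4, (1:ℝ)/4) ∈ unitTriangle := by constructor <;> norm_num
  have hev : evalP w =ᶠ[nhds ((1:ℝ)/4, (1:ℝ)/4)] 0 := by
    filter_upwards [isOpen_unitTriangle.mem_nhds hm] with x hx using hz x hx
  have := hana.eqOn_zero_of_preconnected_of_eventuallyEq_zero isPreconnected_univ
    (Set.mem_univ _) hev
  refine MvPolynomial.funext fun v => ?_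
  have h2 : ![v 0, v 1] = v := by funext i; fin_cases i <;> rfl
  have := this (Set.mem_univ (v 0, v 1))
  simpa [evalP, h2] using this

lemma pos_integral {w : MvPolynomial (Fin 2) ℝ} (hw : w ≠ 0) :
    0 < ∫ x in unitTriangle, (evalP w x)^2 := by
  have hint : IntegrableOn (fun x => (evalP w x)^2) unitTriangle volume :=
    integrableOn_of_continuous ((continuous_evalP w).pow 2) isBounded_unitTriangle
  rw [integral_pos_iff_support_of_nonneg_ae (Filter.Eventually.of_forall fun x => sq_nonneg _) hint]
  obtain ⟨x, hx, hxne⟩ : ∃ x ∈ unitTriangle, evalP w x ≠ 0 := by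
    by_contra hc
    push_neg at hc
    exact hw (eq_zero_of_vanish hc)
  have hU : IsOpen ({y | evalP w y ≠ 0} ∩ unitTriangle) :=
    (isOpen_ne_fun (continuous_evalP w) continuous_const).inter isOpen_unitTriangle
  have hne : ({y | evalP w y ≠ 0} ∩ unitTriangle).Nonempty := ⟨x, hxne, hx⟩
  calc (0:ENNReal) < volume ({y | evalP w y ≠ 0} ∩ unitTriangle) := hU.measure_pos _ hne
    _ ≤ (volume.restrict unitTriangle) (Function.support fun x => (evalP w x)^2) := by
        rw [Measure.restrict_apply]
        · refine measure_mono fun y hy => ⟨?_, hy.2⟩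
          simp only [Function.mem_support]
          exact pow_ne_zero 2 hy.1
        · exact (isOpen_ne_fun ((continuous_evalP w).pow 2) continuous_const).measurableSet

lemma evalP_sum {α : Type*} (s : Finset α) (p : α → MvPolynomial (Fin 2) ℝ) (x : ℝ × ℝ) :
    evalP (∑ i ∈ s, p i) x = ∑ i ∈ s, evalP (p i) x := by
  simp [evalP]

lemma sq_sum_integral {n : ℕ} (g : Fin n → (ℝ × ℝ) → ℝ) (hg : ∀ i, Continuous (g i))
    (c : Fin n → ℝ) :
    ∫ x in unitTriangle, (∑ i, c i * g i x)^2
      = ∑ i, ∑ j, c i * c j * ∫ x in unitTriangle, g i x * g j x := by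
  have hgint : ∀ i j : Fin n, IntegrableOn (fun x => g i x * g j x) unitTriangle volume :=
    fun i j => integrableOn_of_continuous ((hg i).mul (hg j)) isBounded_unitTriangle
  have h1 : ∀ x : ℝ × ℝ, (∑ i, c i * g i x)^2 = ∑ i, ∑ j, c i * c j * (g i x * g j x) := by
    intro x
    rw [sq, Finset.sum_mul_sum]
    exact Finset.sum_congr rfl fun i _ => Finset.sum_congr rfl fun j _ => by ring
  simp_rw [h1]
  rw [integral_finset_sum]
  · refine Finset.sum_congr rfl fun i _ => ?_
    rw [integral_finset_sum]
    · exact Finset.sum_congr rfl fun j _ => by rw [integral_const_mul]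
    · exact fun j _ => (hgint i j).const_mul _
  · exact fun i _ => integrable_finset_sum _ fun j _ => (hgint i j).const_mul _

set_option maxHeartbeats 1000000 in
set_option synthInstance.maxHeartbeats 200000 in
theorem core_ineq (k : ℕ) : ∃ C > (0:ℝ), ∀ w : MvPolynomial (Fin 2) ℝ, w.totalDegree ≤ k →
    (∫ x in unitTriangle, ((evalP (pderiv 0 w) x)^2 + (evalP (pderiv 1 w) x)^2))
      ≤ C * ∫ x in unitTriangle, (evalP w x)^2 := by
  classical
  set V := MvPolynomial.restrictTotalDegree (Fin 2) ℝ k with hV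
  set n := Module.finrank ℝ V with hn
  set bV : Module.Basis (Fin n) ℝ V := Module.finBasis ℝ V with hbV
  set e : (Fin n → ℝ) ≃ₗ[ℝ] V := bV.equivFun.symm with he
  -- expansion of elements
  have key : ∀ c : Fin n → ℝ, ((e c : V) : MvPolynomial (Fin 2) ℝ)
      = ∑ i, c i • ((bV i : V) : MvPolynomial (Fin 2) ℝ) := by
    intro c
    have h1 : (e c : V) = ∑ i, c i • bV i := bV.equivFun_symm_apply c
    rw [h1]
    push_cast
    rfl
  have heval : ∀ (c : Fin n → ℝ) (x : ℝ × ℝ),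
      evalP ((e c : V) : MvPolynomial (Fin 2) ℝ) x
        = ∑ i, c i * evalP ((bV i : V) : MvPolynomial (Fin 2) ℝ) x := by
    intro c x
    rw [key c, evalP_sum]
    exact Finset.sum_congr rfl fun i _ => evalP_smul _ _ _
  have hderiv : ∀ (t : Fin 2) (c : Fin n → ℝ) (x : ℝ × ℝ),
      evalP (pderiv t ((e c : V) : MvPolynomial (Fin 2) ℝ)) x
        = ∑ i, c i * evalP (pderiv t ((bV i : V) : MvPolynomial (Fin 2) ℝ)) x := by
    intro t c x
    rw [key c, map_sum, evalP_sum]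
    refine Finset.sum_congr rfl fun i _ => ?_
    rw [Derivation.map_smul, evalP_smul]
  -- matrices
  set g : Fin n → (ℝ × ℝ) → ℝ := fun i => evalP ((bV i : V) : MvPolynomial (Fin 2) ℝ) with hg
  set g0 : Fin n → (ℝ × ℝ) → ℝ := fun i => evalP (pderiv 0 ((bV i : V) : MvPolynomial (Fin 2) ℝ)) with hg0
  set g1 : Fin n → (ℝ × ℝ) → ℝ := fun i => evalP (pderiv 1 ((bV i : V) : MvPolynomial (Fin 2) ℝ)) with hg1
  set Q : (Fin n → Fin n → ℝ) → (Fin n → ℝ) → ℝ :=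
    fun P c => ∑ i, ∑ j, c i * c j * P i j with hQdef
  set A2 : Fin n → Fin n → ℝ := fun i j => ∫ x in unitTriangle, g i x * g j x with hA2
  set A0 : Fin n → Fin n → ℝ := fun i j => ∫ x in unitTriangle, g0 i x * g0 j x with hA0
  set A1 : Fin n → Fin n → ℝ := fun i j => ∫ x in unitTriangle, g1 i x * g1 j x with hA1
  have hQ2 : ∀ c : Fin n → ℝ,
      (∫ x in unitTriangle, (evalP ((e c : V) : MvPolynomial (Fin 2) ℝ) x)^2) = Q A2 c := by
    intro c
    simp_rw [heval c]
    exact sq_sum_integral g (fun i => continuous_evalP _) c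
  have hQ0 : ∀ c : Fin n → ℝ,
      (∫ x in unitTriangle, (evalP (pderiv 0 ((e c : V) : MvPolynomial (Fin 2) ℝ)) x)^2) = Q A0 c := by
    intro c
    simp_rw [hderiv 0 c]
    exact sq_sum_integral g0 (fun i => continuous_evalP _) c
  have hQ1 : ∀ c : Fin n → ℝ,
      (∫ x in unitTriangle, (evalP (pderiv 1 ((e c : V) : MvPolynomial (Fin 2) ℝ)) x)^2) = Q A1 c := by
    intro c
    simp_rw [hderiv 1 c]
    exact sq_sum_integral g1 (fun i => continuous_evalP _) c
  have hM1 : ∀ c : Fin n → ℝ,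
      (∫ x in unitTriangle, ((evalP (pderiv 0 ((e c : V) : MvPolynomial (Fin 2) ℝ)) x)^2
          + (evalP (pderiv 1 ((e c : V) : MvPolynomial (Fin 2) ℝ)) x)^2)) = Q A0 c + Q A1 c := by
    intro c
    rw [integral_add, hQ0, hQ1]
    · exact integrableOn_of_continuous ((continuous_evalP _).pow 2) isBounded_unitTriangle
    · exact integrableOn_of_continuous ((continuous_evalP _).pow 2) isBounded_unitTriangle
  -- continuity and homogeneity of Q
  have hQcont : ∀ P, Continuous (Q P) := by
    intro P
    refine continuous_finset_sum _ fun i _ => continuous_finset_sum _ fun j _ => ?_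
    exact ((continuous_apply i).mul (continuous_apply j)).mul continuous_const
  have hQsmul : ∀ P (t : ℝ) (c : Fin n → ℝ), Q P (t • c) = t^2 * Q P c := by
    intro P t c
    simp only [hQdef, Finset.mul_sum, Pi.smul_apply, smul_eq_mul]
    exact Finset.sum_congr rfl fun i _ => Finset.sum_congr rfl fun j _ => by ring
  have hQzero : ∀ P, Q P 0 = 0 := by intro P; simp [hQdef]
  -- positivity
  have hcne : ∀ c : Fin n → ℝ, c ≠ 0 → ((e c : V) : MvPolynomial (Fin 2) ℝ) ≠ 0 := by
    intro c hc
    rw [Ne, Submodule.coe_eq_zero]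
    intro h0
    exact hc (e.injective (by rw [h0, map_zero]))
  have hpos : ∀ c : Fin n → ℝ, c ≠ 0 → 0 < Q A2 c := by
    intro c hc
    rw [← hQ2 c]
    exact pos_integral (hcne c hc)
  -- sphere and maximum
  set f : (Fin n → ℝ) → ℝ := fun c => (Q A0 c + Q A1 c) / Q A2 c with hf
  have hSne : ∀ c, c ∈ Metric.sphere (0 : Fin n → ℝ) 1 → c ≠ 0 := by
    intro c hc h0
    rw [mem_sphere_iff_norm] at hc
    simp [h0] at hc
  have hfcont : ContinuousOn f (Metric.sphere (0 : Fin n → ℝ) 1) := by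
    refine ContinuousOn.div ((hQcont A0).add (hQcont A1)).continuousOn (hQcont A2).continuousOn ?_
    exact fun c hc => (hpos c (hSne c hc)).ne'
  have hmem1 : (1 : MvPolynomial (Fin 2) ℝ) ∈ V := by
    rw [hV, MvPolynomial.mem_restrictTotalDegree]
    simp [MvPolynomial.totalDegree_one]
  have hone : (⟨1, hmem1⟩ : V) ≠ 0 := by
    intro h
    have := congrArg (fun v : V => (v : MvPolynomial (Fin 2) ℝ)) h
    simpa using this
  set c₁ : Fin n → ℝ := bV.equivFun ⟨1, hmem1⟩ with hc₁
  have hc₁ne : c₁ ≠ 0 := by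
    intro h
    exact hone (bV.equivFun.injective (by rw [map_zero, ← hc₁, h]))
  have hvS : (‖c₁‖⁻¹ • c₁) ∈ Metric.sphere (0 : Fin n → ℝ) 1 := by
    rw [mem_sphere_iff_norm, sub_zero, norm_smul, norm_inv, norm_norm,
      inv_mul_cancel₀ (norm_ne_zero_iff.mpr hc₁ne)]
  obtain ⟨cm, hcmS, hmax⟩ := (isCompact_sphere (0 : Fin n → ℝ) 1).exists_isMaxOn
    ⟨_, hvS⟩ hfcont
  refine ⟨max (f cm) 1, lt_of_lt_of_le one_pos (le_max_right _ _), ?_⟩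
  intro w hw
  have hwV : w ∈ V := by rw [hV, MvPolynomial.mem_restrictTotalDegree]; exact hw
  set c : Fin n → ℝ := bV.equivFun ⟨w, hwV⟩ with hc
  have hec : (e c : V) = ⟨w, hwV⟩ := by rw [hc, he]; exact bV.equivFun.symm_apply_apply _
  have hecw : ((e c : V) : MvPolynomial (Fin 2) ℝ) = w := by rw [hec]
  rw [← hecw, hM1 c, hQ2 c]
  -- reduce to Q inequality
  rcases eq_or_ne c 0 with h0 | h0
  · rw [h0, hQzero, hQzero, hQzero]; norm_num
  · set u : Fin n → ℝ := ‖c‖⁻¹ • c with hu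
    have hcu : c = ‖c‖ • u := (smul_inv_smul₀ (norm_ne_zero_iff.mpr h0) c).symm
    have huS : u ∈ Metric.sphere (0 : Fin n → ℝ) 1 := by
      rw [mem_sphere_iff_norm, sub_zero, hu, norm_smul, norm_inv, norm_norm,
        inv_mul_cancel₀ (norm_ne_zero_iff.mpr h0)]
    have hQu : Q A0 u + Q A1 u ≤ max (f cm) 1 * Q A2 u := by
      have h1 : f u ≤ f cm := hmax huS
      have h2 : f u ≤ max (f cm) 1 := le_trans h1 (le_max_left _ _)
      have h3 : 0 < Q A2 u := hpos u (hSne u huS)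
      calc Q A0 u + Q A1 u = f u * Q A2 u := (div_mul_cancel₀ _ h3.ne').symm
        _ ≤ max (f cm) 1 * Q A2 u := mul_le_mul_of_nonneg_right h2 h3.le
    have hsc : ∀ P : Fin n → Fin n → ℝ, Q P c = ‖c‖^2 * Q P u := by
      intro P
      conv_lhs => rw [hcu]
      exact hQsmul P ‖c‖ u
    calc Q A0 c + Q A1 c = ‖c‖^2 * (Q A0 u + Q A1 u) := by rw [hsc, hsc]; ring
      _ ≤ ‖c‖^2 * (max (f cm) 1 * Q A2 u) :=
          mul_le_mul_of_nonneg_left hQu (sq_nonneg _)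
      _ = max (f cm) 1 * Q A2 c := by rw [hsc]; ring

lemma fderiv_evalP (w : MvPolynomial (Fin 2) ℝ) (x : ℝ × ℝ) :
    fderiv ℝ (evalP w) x = D w x := (hasFDerivAt_evalP w x).fderiv

lemma fderiv_evalP_e1 (w : MvPolynomial (Fin 2) ℝ) (x : ℝ × ℝ) :
    fderiv ℝ (evalP w) x (1, 0) = evalP (pderiv 0 w) x := by
  rw [fderiv_evalP]; simp [D]

lemma fderiv_evalP_e2 (w : MvPolynomial (Fin 2) ℝ) (x : ℝ × ℝ) :
    fderiv ℝ (evalP w) x (0, 1) = evalP (pderiv 1 w) x := by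
  rw [fderiv_evalP]; simp [D]

/-- rescaled polynomial: `evalP (scaleP h w) y = evalP w (h • y)` -/
noncomputable def scaleP (h : ℝ) (w : MvPolynomial (Fin 2) ℝ) : MvPolynomial (Fin 2) ℝ :=
  ∑ d ∈ w.support, monomial d (coeff d w * h ^ (d 0 + d 1))

lemma totalDegree_scaleP (h : ℝ) (w : MvPolynomial (Fin 2) ℝ) :
    (scaleP h w).totalDegree ≤ w.totalDegree := by
  refine (totalDegree_finset_sum _ _).trans (Finset.sup_le fun d hd => ?_)
  exact (totalDegree_monomial_le _ _).trans (le_totalDegree hd)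

lemma evalP_scaleP (h : ℝ) (w : MvPolynomial (Fin 2) ℝ) (y : ℝ × ℝ) :
    evalP (scaleP h w) y = evalP w (h • y) := by
  rw [evalP, evalP, scaleP, map_sum]
  conv_rhs => rw [w.as_sum, map_sum]
  refine Finset.sum_congr rfl fun d hd => ?_
  rw [eval_monomial, eval_monomial]
  rw [Finsupp.prod_fintype _ _ (fun i => pow_zero _), Finsupp.prod_fintype _ _ (fun i => pow_zero _)]
  have h1 : ((h • y).1 : ℝ) = h * y.1 := rfl
  have h2 : ((h • y).2 : ℝ) = h * y.2 := rfl
  simp only [Fin.prod_univ_two, Matrix.cons_val_zero, Matrix.cons_val_one, Matrix.head_cons,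
    h1, h2, mul_pow, pow_add]
  ring

lemma evalP_pderiv_scaleP (h : ℝ) (w : MvPolynomial (Fin 2) ℝ) (y : ℝ × ℝ) :
    evalP (pderiv 0 (scaleP h w)) y = h * evalP (pderiv 0 w) (h • y) ∧
    evalP (pderiv 1 (scaleP h w)) y = h * evalP (pderiv 1 w) (h • y) := by
  have h1 : HasFDerivAt (evalP (scaleP h w)) (D (scaleP h w) y) y := hasFDerivAt_evalP _ _
  have h2 : HasFDerivAt (evalP (scaleP h w))
      ((D w (h • y)).comp (h • ContinuousLinearMap.id ℝ (ℝ × ℝ))) y := by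
    have hcomp : evalP (scaleP h w) = (evalP w) ∘ (fun z : ℝ × ℝ => h • z) := by
      funext z; exact evalP_scaleP h w z
    rw [hcomp]
    exact (hasFDerivAt_evalP w (h • y)).comp y ((hasFDerivAt_id y).const_smul h)
  have heq := h1.unique h2
  constructor
  · have := congrArg (fun L : ℝ × ℝ →L[ℝ] ℝ => L (1, 0)) heq
    simpa [D, Prod.smul_def] using this
  · have := congrArg (fun L : ℝ × ℝ →L[ℝ] ℝ => L (0, 1)) heq
    simpa [D, Prod.smul_def] using this

/-- The inverse inequality `‖∇w‖²_{hK̂} ≤ C h⁻² ‖w‖²_{hK̂}` for polynomials of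
degree at most `k`, with `C` depending only on `k`. -/
theorem inverse_inequality_gradient (k : ℕ) :
    ∃ C > (0:ℝ), ∀ h > (0:ℝ), ∀ w : MvPolynomial (Fin 2) ℝ, w.totalDegree ≤ k →
      (∫ x in dilate h unitTriangle,
          ((fderiv ℝ (evalP w) x (1, 0))^2 + (fderiv ℝ (evalP w) x (0, 1))^2)) ≤
        C / h^2 * ∫ x in dilate h unitTriangle, (evalP w x)^2 := by
  obtain ⟨C, hC, hcore⟩ := core_ineq k
  refine ⟨C, hC, ?_⟩
  intro h hh w hw
  have hne : h ≠ 0 := hh.ne'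
  -- change of variables setup
  have hmeas : MeasurableSet unitTriangle := isOpen_unitTriangle.measurableSet
  have hder : ∀ y ∈ unitTriangle,
      HasFDerivWithinAt (fun z : ℝ × ℝ => h • z) (h • ContinuousLinearMap.id ℝ (ℝ × ℝ))
        unitTriangle y :=
    fun y _ => ((hasFDerivAt_id y).const_smul h).hasFDerivWithinAt
  have hinj : Set.InjOn (fun z : ℝ × ℝ => h • z) unitTriangle :=
    fun a _ b _ hab => smul_right_injective (ℝ × ℝ) hne hab
  have hdet : (h • ContinuousLinearMap.id ℝ (ℝ × ℝ)).det = h ^ 2 := by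
    rw [ContinuousLinearMap.det, ContinuousLinearMap.coe_smul, ContinuousLinearMap.coe_id,
      LinearMap.det_smul, LinearMap.det_id, mul_one, Module.finrank_prod, Module.finrank_self]
  have hchange : ∀ g : ℝ × ℝ → ℝ, ∫ x in dilate h unitTriangle, g x
      = ∫ y in unitTriangle, h ^ 2 • g (h • y) := by
    intro g
    rw [show dilate h unitTriangle = (fun z : ℝ × ℝ => h • z) '' unitTriangle from rfl,
      integral_image_eq_integral_abs_det_fderiv_smul volume hmeas (fun y hy => hder y hy) hinj g]
    simp_rw [hdet, abs_of_pos (pow_pos hh 2)]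
  -- rewrite LHS integrand using fderiv formulas
  have hL : (∫ x in dilate h unitTriangle,
        ((fderiv ℝ (evalP w) x (1, 0))^2 + (fderiv ℝ (evalP w) x (0, 1))^2))
      = ∫ y in unitTriangle, ((evalP (pderiv 0 (scaleP h w)) y)^2
          + (evalP (pderiv 1 (scaleP h w)) y)^2) := by
    simp_rw [fderiv_evalP_e1, fderiv_evalP_e2]
    rw [hchange (fun x => (evalP (pderiv 0 w) x)^2 + (evalP (pderiv 1 w) x)^2)]
    refine integral_congr_ae (Filter.Eventually.of_forall fun y => ?_)
    obtain ⟨e0, e1⟩ := evalP_pderiv_scaleP h w y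
    simp only [e0, e1, smul_eq_mul]
    ring
  have hR : (∫ x in dilate h unitTriangle, (evalP w x)^2)
      = h ^ 2 * ∫ y in unitTriangle, (evalP (scaleP h w) y)^2 := by
    rw [hchange (fun x => (evalP w x)^2), ← integral_const_mul]
    refine integral_congr_ae (Filter.Eventually.of_forall fun y => ?_)
    simp only [evalP_scaleP, smul_eq_mul]
  rw [hL, hR]
  have hkey := hcore (scaleP h w) ((totalDegree_scaleP h w).trans hw)
  calc (∫ y in unitTriangle, ((evalP (pderiv 0 (scaleP h w)) y)^2
          + (evalP (pderiv 1 (scaleP h w)) y)^2))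
      ≤ C * ∫ y in unitTriangle, (evalP (scaleP h w) y)^2 := hkey
    _ = C / h ^ 2 * (h ^ 2 * ∫ y in unitTriangle, (evalP (scaleP h w) y)^2) := by
        field_simp
end

section
/- Let Ê be the open segment from (0,0) to (1,0), an edge of the unit triangle K̂. There exists a constant C > 0 such that for every h > 0 and every continuously differentiable function w : ℝ² → ℝ, ∫_{hÊ} w² dH¹ ≤ C · ( h⁻¹ ∫_{hK̂} w² dx + h ∫_{hK̂} (w² + ‖∇w‖²) dx ), where H¹ is the one-dimensional Hausdorff measure on the segment hÊ = {h·x : x ∈ Ê}. -/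
open MeasureTheory Set

/-- The open edge `Ê` of the unit triangle from `(0,0)` to `(1,0)`. -/
def unitEdge : Set (ℝ × ℝ) := {x | 0 < x.1 ∧ x.1 < 1 ∧ x.2 = 0}

/-- continuous functions are integrable on bounded subsets of the plane -/
lemma integrableOn_of_bounded {f : ℝ × ℝ → ℝ} (hf : Continuous f) {S : Set (ℝ × ℝ)}
    (hS : Bornology.IsBounded S) : IntegrableOn f S volume :=
  ((hf.continuousOn).integrableOn_compact hS.isCompact_closure).mono_set subset_closure

lemma dilate_triangle {h : ℝ} (hh : 0 < h) :
    dilate h unitTriangle = {p : ℝ × ℝ | 0 < p.1 ∧ 0 < p.2 ∧ p.1 + p.2 < h} := by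
  ext p
  constructor
  · rintro ⟨q, ⟨h1, h2, h3⟩, rfl⟩
    simp only [Prod.smul_fst, Prod.smul_snd, smul_eq_mul, Set.mem_setOf_eq]
    refine ⟨by positivity, by positivity, by nlinarith⟩
  · rintro ⟨h1, h2, h3⟩
    refine ⟨h⁻¹ • p, ⟨?_, ?_, ?_⟩, ?_⟩
    · show (0:ℝ) < h⁻¹ * p.1; positivity
    · show (0:ℝ) < h⁻¹ * p.2; positivity
    · simp only [Prod.smul_fst, Prod.smul_snd, smul_eq_mul]
      rw [← mul_add]
      calc h⁻¹ * (p.1 + p.2) < h⁻¹ * h := by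
            exact mul_lt_mul_of_pos_left h3 (by positivity)
        _ = 1 := inv_mul_cancel₀ hh.ne'
    · simp [smul_smul, mul_inv_cancel₀ hh.ne']

lemma dilate_edge {h : ℝ} (hh : 0 < h) :
    dilate h unitEdge = (fun x : ℝ => (x, (0:ℝ))) '' Ioo 0 h := by
  ext p
  constructor
  · rintro ⟨q, ⟨h1, h2, h3⟩, rfl⟩
    exact ⟨h * q.1, ⟨by positivity, by nlinarith⟩, by simp [Prod.ext_iff, h3]⟩
  · rintro ⟨x, ⟨h1, h2⟩, rfl⟩
    refine ⟨(h⁻¹ * x, 0), ⟨by positivity, ?_, rfl⟩, ?_⟩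
    · calc h⁻¹ * x < h⁻¹ * h := mul_lt_mul_of_pos_left h2 (by positivity)
        _ = 1 := inv_mul_cancel₀ hh.ne'
    · simp [Prod.ext_iff, ← mul_assoc, mul_inv_cancel₀ hh.ne']


lemma edge_integral (g : ℝ × ℝ → ℝ) (S : Set ℝ) (hS : MeasurableSet S) :
    ∫ p in ((fun x : ℝ => (x, (0:ℝ))) '' S), g p ∂(μH[1]) = ∫ x in S, g (x, 0) := by
  set ι : ℝ → ℝ × ℝ := fun x => (x, 0) with hι
  have hiso : Isometry ι := by
    apply Isometry.of_dist_eq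
    intro a b
    simp [hι, Prod.dist_eq, dist_nonneg]
  have hinj : Function.Injective ι := fun a b hab => congrArg Prod.fst hab
  have hme : MeasurableEmbedding ι := hiso.isClosedEmbedding.measurableEmbedding
  have hmeas : MeasurableSet (ι '' S) := hme.measurableSet_image.mpr hS
  have hmapμ : Measure.map ι (μH[1]) = (μH[1] : Measure (ℝ × ℝ)).restrict (range ι) :=
    hiso.map_hausdorffMeasure (Or.inl zero_le_one)
  have key : (μH[1] : Measure (ℝ × ℝ)).restrict (ι '' S)
      = Measure.map ι (volume.restrict S) := by
    have h1 : (μH[1] : Measure (ℝ × ℝ)).restrict (ι '' S)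
        = ((μH[1] : Measure (ℝ × ℝ)).restrict (range ι)).restrict (ι '' S) := by
      rw [Measure.restrict_restrict hmeas, Set.inter_eq_left.mpr (image_subset_range ι S)]
    rw [h1, ← hmapμ, Measure.restrict_map hme.measurable hmeas,
      Set.preimage_image_eq S hinj, hausdorffMeasure_real]
  rw [key, hme.integral_map]


/-- master integrand -/
noncomputable def Phi (h : ℝ) (w : ℝ × ℝ → ℝ) (p : ℝ × ℝ) : ℝ :=
  2 * (w p)^2 + 2 * h * |w p| * (|fderiv ℝ w p (1, 0)| + |fderiv ℝ w p (0, 1)|)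

lemma Phi_nonneg (h : ℝ) (hh : 0 < h) (w : ℝ × ℝ → ℝ) (p : ℝ × ℝ) : 0 ≤ Phi h w p := by
  unfold Phi; positivity

lemma Phi_continuous (h : ℝ) {w : ℝ × ℝ → ℝ} (hw : ContDiff ℝ 1 w) :
    Continuous (Phi h w) := by
  have hfc : Continuous (fderiv ℝ w) := hw.continuous_fderiv one_ne_zero
  have hd1 : Continuous (fun p => fderiv ℝ w p (1, 0)) := hfc.clm_apply continuous_const
  have hd2 : Continuous (fun p => fderiv ℝ w p (0, 1)) := hfc.clm_apply continuous_const
  have hwc := hw.continuous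
  unfold Phi
  fun_prop

lemma key_pointwise {h : ℝ} (hh : 0 < h) {w : ℝ × ℝ → ℝ} (hw : ContDiff ℝ 1 w)
    {x : ℝ} (hx : x ∈ Ioo (0:ℝ) h) :
    (w (x, 0))^2 ≤ ∫ s in Ioo (0:ℝ) 1, (1 - s) * Phi h w ((1 - s) * x, s * (h / 2)) := by
  obtain ⟨hx0, hxh⟩ := hx
  set γ : ℝ → ℝ × ℝ := fun s => ((1 - s) * x, s * (h / 2)) with hγdef
  have hγc : Continuous γ := by fun_prop
  have hγ : ∀ s : ℝ, HasDerivAt γ (-x, h / 2) s := by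
    intro s
    apply HasDerivAt.prodMk
    · simpa using (((hasDerivAt_id s).const_sub 1).mul_const x)
    · simpa using ((hasDerivAt_id s).mul_const (h / 2))
  have hdiff : Differentiable ℝ w := hw.differentiable one_ne_zero
  have hWγ : ∀ s : ℝ, HasDerivAt (fun s => w (γ s)) (fderiv ℝ w (γ s) (-x, h / 2)) s :=
    fun s => (hdiff (γ s)).hasFDerivAt.comp_hasDerivAt s (hγ s)
  set D : ℝ → ℝ := fun s => fderiv ℝ w (γ s) (-x, h / 2) with hD
  set F' : ℝ → ℝ := fun s => -2 * (1 - s) * (w (γ s))^2 + (1 - s)^2 * (2 * w (γ s) * D s)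
    with hF'def
  have hF : ∀ s : ℝ, HasDerivAt (fun s => (1 - s)^2 * (w (γ s))^2) (F' s) s := by
    intro s
    have h0 : HasDerivAt (fun s : ℝ => 1 - s) (-1) s := by
      simpa using (hasDerivAt_id s).const_sub 1
    have h1 : HasDerivAt (fun s : ℝ => (1 - s)^2) (-2 * (1 - s)) s :=
      (h0.pow 2).congr_deriv (by push_cast; ring)
    have h2 : HasDerivAt (fun s => (w (γ s))^2) (2 * w (γ s) * D s) s :=
      ((hWγ s).pow 2).congr_deriv (by push_cast; ring)
    exact (h1.mul h2).congr_deriv (by ring)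
  have hfc : Continuous (fderiv ℝ w) := hw.continuous_fderiv one_ne_zero
  have hDc : Continuous D := (hfc.comp hγc).clm_apply continuous_const
  have hwγc : Continuous (fun s => w (γ s)) := hw.continuous.comp hγc
  have hF'c : Continuous F' := by fun_prop
  have hFTC : ∫ s in (0:ℝ)..1, F' s = (1 - 1)^2 * (w (γ 1))^2 - (1 - 0)^2 * (w (γ 0))^2 :=
    intervalIntegral.integral_eq_sub_of_hasDerivAt (fun s _ => hF s)
      (hF'c.intervalIntegrable 0 1)
  have hγ0 : γ 0 = (x, 0) := by simp [hγdef]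
  have hstart : (w (x, 0))^2 = ∫ s in (0:ℝ)..1, -F' s := by
    rw [intervalIntegral.integral_neg, hFTC, hγ0]
    ring
  rw [hstart]
  have hmono : ∫ s in (0:ℝ)..1, -F' s ≤ ∫ s in (0:ℝ)..1, (1 - s) * Phi h w (γ s) := by
    apply intervalIntegral.integral_mono_on zero_le_one
      (hF'c.neg.intervalIntegrable 0 1)
      (((continuous_const.sub continuous_id).mul ((Phi_continuous h hw).comp hγc)).intervalIntegrable 0 1)
    intro s hs
    obtain ⟨hs0, hs1⟩ := hs
    have hDval : D s = -x * fderiv ℝ w (γ s) (1, 0) + (h / 2) * fderiv ℝ w (γ s) (0, 1) := by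
      have hvec : ((-x, h / 2) : ℝ × ℝ) = (-x) • ((1:ℝ), (0:ℝ)) + (h / 2) • ((0:ℝ), (1:ℝ)) := by
        simp [Prod.ext_iff]
      rw [hD]
      simp only [hvec, map_add, _root_.map_smul, smul_eq_mul]
    set d1 := fderiv ℝ w (γ s) (1, 0)
    set d2 := fderiv ℝ w (γ s) (0, 1)
    set W := w (γ s)
    have habsD : |D s| ≤ h * (|d1| + |d2|) := by
      rw [hDval]
      calc |(-x) * d1 + (h / 2) * d2| ≤ |(-x) * d1| + |(h / 2) * d2| := abs_add_le _ _
        _ = |x| * |d1| + (h / 2) * |d2| := by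
            rw [abs_mul, abs_mul, abs_neg, abs_of_pos (by linarith : (0:ℝ) < h / 2)]
        _ ≤ h * |d1| + h * |d2| := by
            have h1 : |x| ≤ h := by rw [abs_of_pos hx0]; linarith
            have := abs_nonneg d1
            have := abs_nonneg d2
            nlinarith
        _ = h * (|d1| + |d2|) := by ring
    show -F' s ≤ (1 - s) * Phi h w (γ s)
    rw [hF'def]
    unfold Phi
    simp only
    have hWD : -((1 - s)^2 * (2 * W * D s)) ≤ (1 - s) * (2 * h * |W| * (|d1| + |d2|)) := by
      have h1 : -(2 * W * D s) ≤ 2 * |W| * |D s| := by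
        calc -(2 * W * D s) ≤ |2 * W * D s| := neg_le_abs _
          _ = 2 * |W| * |D s| := by rw [abs_mul, abs_mul]; simp
      have h2 : (1 - s)^2 ≤ (1 - s) := by nlinarith
      have h3 : (0:ℝ) ≤ 2 * |W| * |D s| := by positivity
      have h4 : -((1 - s)^2 * (2 * W * D s)) ≤ (1 - s)^2 * (2 * |W| * |D s|) := by nlinarith [sq_nonneg (1 - s)]
      calc -((1 - s)^2 * (2 * W * D s)) ≤ (1 - s)^2 * (2 * |W| * |D s|) := h4
        _ ≤ (1 - s) * (2 * |W| * |D s|) := by nlinarith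
        _ ≤ (1 - s) * (2 * |W| * (h * (|d1| + |d2|))) := by
            have h5 : (0:ℝ) ≤ 1 - s := by linarith
            have h6 : (0:ℝ) ≤ 2 * |W| := by positivity
            exact mul_le_mul_of_nonneg_left (mul_le_mul_of_nonneg_left habsD h6) h5
        _ = (1 - s) * (2 * h * |W| * (|d1| + |d2|)) := by ring
    nlinarith [hWD]
  calc (∫ s in (0:ℝ)..1, -F' s) ≤ ∫ s in (0:ℝ)..1, (1 - s) * Phi h w (γ s) := hmono
    _ = ∫ s in Ioo (0:ℝ) 1, (1 - s) * Phi h w (γ s) := by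
        rw [intervalIntegral.integral_of_le zero_le_one, integral_Ioc_eq_integral_Ioo]


lemma integrableOn_of_bounded1 {f : ℝ → ℝ} (hf : Continuous f) {S : Set ℝ}
    (hS : Bornology.IsBounded S) : IntegrableOn f S volume :=
  ((hf.continuousOn).integrableOn_compact hS.isCompact_closure).mono_set subset_closure

/-- inner change of variables and enlargement of the domain -/
lemma section_bound {f : ℝ × ℝ → ℝ} (hf : Continuous f) (hf0 : ∀ p, 0 ≤ f p) {h s : ℝ}
    (hh : 0 < h) (hs0 : 0 < s) (hs1 : s < 1) :
    ∫ x in Ioo (0:ℝ) h, (1 - s) * f ((1 - s) * x, s * (h / 2)) ≤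
    ∫ u in Ioo (0:ℝ) (h - s * (h / 2)), f (u, s * (h / 2)) := by
  have hc : (0:ℝ) < 1 - s := by linarith
  have e1 : ∫ x in Ioo (0:ℝ) h, (1 - s) * f ((1 - s) * x, s * (h / 2))
      = (1 - s) * ∫ x in Ioo (0:ℝ) h, f ((1 - s) * x, s * (h / 2)) := integral_const_mul _ _
  have e2 : (1 - s) * ∫ x in Ioo (0:ℝ) h, f ((1 - s) * x, s * (h / 2))
      = ∫ u in Ioo (0:ℝ) ((1 - s) * h), f (u, s * (h / 2)) := by
    rw [show ∫ x in Ioo (0:ℝ) h, f ((1 - s) * x, s * (h / 2))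
        = ∫ x in (0:ℝ)..h, f ((1 - s) * x, s * (h / 2)) by
      rw [intervalIntegral.integral_of_le hh.le, integral_Ioc_eq_integral_Ioo]]
    have hcv := intervalIntegral.smul_integral_comp_mul_left
      (a := 0) (b := h) (fun u => f (u, s * (h / 2))) (1 - s)
    rw [smul_eq_mul] at hcv
    rw [hcv, mul_zero, intervalIntegral.integral_of_le (by positivity : (0:ℝ) ≤ (1 - s) * h),
      integral_Ioc_eq_integral_Ioo]
  rw [e1, e2]
  apply setIntegral_mono_set
  · exact integrableOn_of_bounded1 (by fun_prop) (Metric.isBounded_Ioo _ _)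
  · exact Filter.Eventually.of_forall (fun u => hf0 _)
  · apply HasSubset.Subset.eventuallyLE
    apply Ioo_subset_Ioo_right
    nlinarith

/-- The scaled trace inequality
`‖w‖²_{hÊ} ≤ C (h⁻¹ ‖w‖²_{hK̂} + h ‖w‖²_{1,hK̂})` for continuously differentiable `w`. -/
theorem scaled_trace_inequality :
    ∃ C > (0:ℝ), ∀ h > (0:ℝ), ∀ w : ℝ × ℝ → ℝ, ContDiff ℝ 1 w →
      (∫ x in dilate h unitEdge, (w x)^2 ∂(μH[1])) ≤
        C * (h⁻¹ * (∫ x in dilate h unitTriangle, (w x)^2) +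
          h * ∫ x in dilate h unitTriangle,
            ((w x)^2 + ((fderiv ℝ w x (1, 0))^2 + (fderiv ℝ w x (0, 1))^2))) := by
  refine ⟨8, by norm_num, ?_⟩
  intro h hh w hw
  have hfc : Continuous (fderiv ℝ w) := hw.continuous_fderiv one_ne_zero
  have hd1c : Continuous (fun p : ℝ × ℝ => fderiv ℝ w p (1, 0)) := hfc.clm_apply continuous_const
  have hd2c : Continuous (fun p : ℝ × ℝ => fderiv ℝ w p (0, 1)) := hfc.clm_apply continuous_const
  have hwc : Continuous w := hw.continuous
  have hPc : Continuous (Phi h w) := Phi_continuous h hw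
  have hP0 : ∀ p, 0 ≤ Phi h w p := Phi_nonneg h hh w
  set T : Set (ℝ × ℝ) := dilate h unitTriangle with hTdef
  have hT : T = {p : ℝ × ℝ | 0 < p.1 ∧ 0 < p.2 ∧ p.1 + p.2 < h} := dilate_triangle hh
  have hTmeas : MeasurableSet T := by
    rw [hT]
    exact ((isOpen_lt continuous_const continuous_fst).inter
      ((isOpen_lt continuous_const continuous_snd).inter
        (isOpen_lt (continuous_fst.add continuous_snd) continuous_const))).measurableSet
  have hTbdd : Bornology.IsBounded T := by
    apply Bornology.IsBounded.subset
      ((Metric.isBounded_Icc (0:ℝ) h).prod (Metric.isBounded_Icc (0:ℝ) h))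
    rw [hT]
    rintro p ⟨p1, p2, p3⟩
    exact ⟨⟨le_of_lt p1, by linarith⟩, ⟨le_of_lt p2, by linarith⟩⟩
  -- the two-parameter function
  set G : ℝ → ℝ → ℝ := fun x s => (1 - s) * Phi h w ((1 - s) * x, s * (h / 2)) with hGdef
  have hGc : Continuous (Function.uncurry G) := by
    have : Function.uncurry G
        = fun q : ℝ × ℝ => (1 - q.2) * Phi h w ((1 - q.2) * q.1, q.2 * (h / 2)) := rfl
    rw [this]; fun_prop
  have hGint : Integrable (Function.uncurry G)
      ((volume.restrict (Ioo (0:ℝ) h)).prod (volume.restrict (Ioo (0:ℝ) 1))) := by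
    rw [Measure.prod_restrict, ← Measure.volume_eq_prod ℝ ℝ]
    exact integrableOn_of_bounded hGc ((Metric.isBounded_Ioo _ _).prod (Metric.isBounded_Ioo _ _))
  -- the section function
  have hPT : Integrable (T.indicator (Phi h w)) volume :=
    (integrable_indicator_iff hTmeas).mpr (integrableOn_of_bounded hPc hTbdd)
  have hPTprod : Integrable (T.indicator (Phi h w)) (volume.prod volume) := by
    rwa [← Measure.volume_eq_prod ℝ ℝ]
  set q : ℝ → ℝ := fun t => ∫ u : ℝ, T.indicator (Phi h w) (u, t) with hqdef
  have hqint : Integrable q volume := hPTprod.integral_prod_right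
  have hq0 : ∀ t, 0 ≤ q t :=
    fun t => integral_nonneg (fun u => Set.indicator_nonneg (fun p _ => hP0 p) _)
  have hch : (h:ℝ) / 2 ≠ 0 := by positivity
  -- edge reduction
  have hedge : ∫ p in dilate h unitEdge, (w p)^2 ∂(μH[1]) = ∫ x in Ioo (0:ℝ) h, (w (x, 0))^2 := by
    rw [dilate_edge hh, edge_integral (fun p => (w p)^2) (Ioo 0 h) measurableSet_Ioo]
  -- step 1 : pointwise bound integrated over the edge
  have hw2int : IntegrableOn (fun x : ℝ => (w (x, 0))^2) (Ioo 0 h) :=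
    ((((hwc.comp (continuous_id.prodMk continuous_const)).pow 2).continuousOn).integrableOn_compact
      (Metric.isBounded_Ioo (0:ℝ) h).isCompact_closure).mono_set subset_closure
  have hinner_int : IntegrableOn (fun x => ∫ s in Ioo (0:ℝ) 1, G x s) (Ioo (0:ℝ) h) :=
    hGint.integral_prod_left
  have hstep1 : ∫ x in Ioo (0:ℝ) h, (w (x, 0))^2
      ≤ ∫ x in Ioo (0:ℝ) h, ∫ s in Ioo (0:ℝ) 1, G x s :=
    setIntegral_mono_on hw2int hinner_int measurableSet_Ioo
      (fun x hx => key_pointwise hh hw hx)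
  have hswap : ∫ x in Ioo (0:ℝ) h, ∫ s in Ioo (0:ℝ) 1, G x s
      = ∫ s in Ioo (0:ℝ) 1, ∫ x in Ioo (0:ℝ) h, G x s :=
    integral_integral_swap hGint
  -- step 3 : section bound
  have hsec : ∀ s ∈ Ioo (0:ℝ) 1, (∫ x in Ioo (0:ℝ) h, G x s) ≤ q (s * (h / 2)) := by
    intro s hs
    obtain ⟨hs0, hs1⟩ := hs
    have ht0 : 0 < s * (h / 2) := by positivity
    have hth : s * (h / 2) < h := by nlinarith
    have e4 : ∫ u in Ioo (0:ℝ) (h - s * (h / 2)), Phi h w (u, s * (h / 2)) = q (s * (h / 2)) := by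
      rw [hqdef]
      have hind : ∀ u : ℝ, T.indicator (Phi h w) (u, s * (h / 2))
          = (Ioo (0:ℝ) (h - s * (h / 2))).indicator (fun u => Phi h w (u, s * (h / 2))) u := by
        intro u
        by_cases hu : u ∈ Ioo (0:ℝ) (h - s * (h / 2))
        · rw [Set.indicator_of_mem hu, Set.indicator_of_mem]
          rw [hT]
          exact ⟨hu.1, ht0, by have := hu.2; simp only [mem_Ioo] at hu; linarith [hu.2]⟩
        · rw [Set.indicator_of_notMem hu, Set.indicator_of_notMem]
          intro hmem
          rw [hT] at hmem
          exact hu ⟨hmem.1, by linarith [hmem.2.2]⟩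
      simp only [hind]
      rw [integral_indicator measurableSet_Ioo]
    calc (∫ x in Ioo (0:ℝ) h, G x s)
        = ∫ x in Ioo (0:ℝ) h, (1 - s) * Phi h w ((1 - s) * x, s * (h / 2)) := rfl
      _ ≤ ∫ u in Ioo (0:ℝ) (h - s * (h / 2)), Phi h w (u, s * (h / 2)) :=
          section_bound hPc hP0 hh hs0 hs1
      _ = q (s * (h / 2)) := e4
  have hqcomp : IntegrableOn (fun s => q (s * (h / 2))) (Ioo (0:ℝ) 1) :=
    (hqint.comp_mul_right' hch).integrableOn
  have hstep3 : ∫ s in Ioo (0:ℝ) 1, ∫ x in Ioo (0:ℝ) h, G x s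
      ≤ ∫ s in Ioo (0:ℝ) 1, q (s * (h / 2)) :=
    setIntegral_mono_on hGint.integral_prod_right hqcomp measurableSet_Ioo hsec
  -- step 4 : outer change of variables
  have e5 : ∫ s in Ioo (0:ℝ) 1, q (s * (h / 2)) = (2 / h) * ∫ t in Ioo (0:ℝ) (h / 2), q t := by
    rw [← integral_Ioc_eq_integral_Ioo, ← intervalIntegral.integral_of_le zero_le_one,
      intervalIntegral.integral_comp_mul_right q hch, zero_mul, one_mul,
      intervalIntegral.integral_of_le (by positivity : (0:ℝ) ≤ h / 2),
      integral_Ioc_eq_integral_Ioo, smul_eq_mul, inv_div]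
  have e6 : ∫ t in Ioo (0:ℝ) (h / 2), q t ≤ ∫ t, q t :=
    setIntegral_le_integral hqint (Filter.Eventually.of_forall hq0)
  have e7 : ∫ t, q t = ∫ p in T, Phi h w p := by
    rw [← integral_indicator hTmeas, Measure.volume_eq_prod ℝ ℝ]
    exact (integral_prod_symm _ hPTprod).symm
  -- step 7 : final comparison
  have hint1 : IntegrableOn (fun p => (w p)^2) T :=
    integrableOn_of_bounded (by fun_prop) hTbdd
  have hintX : IntegrableOn
      (fun p : ℝ × ℝ => (w p)^2 + ((fderiv ℝ w p (1, 0))^2 + (fderiv ℝ w p (0, 1))^2)) T :=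
    integrableOn_of_bounded (by fun_prop) hTbdd
  have hPle : ∫ p in T, Phi h w p
      ≤ ∫ p in T, (4 * (w p)^2
          + h^2 * ((w p)^2 + ((fderiv ℝ w p (1, 0))^2 + (fderiv ℝ w p (0, 1))^2))) := by
    apply setIntegral_mono_on (integrableOn_of_bounded hPc hTbdd)
      ((hint1.const_mul 4).add (hintX.const_mul (h^2))) hTmeas
    intro p _
    simp only [Pi.add_apply]
    unfold Phi
    nlinarith [sq_nonneg (|w p| - h * |fderiv ℝ w p (1, 0)|),
      sq_nonneg (|w p| - h * |fderiv ℝ w p (0, 1)|), sq_abs (w p),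
      sq_abs (fderiv ℝ w p (1, 0)), sq_abs (fderiv ℝ w p (0, 1)), sq_nonneg (w p),
      abs_nonneg (w p), sq_nonneg (h * w p)]
  have hsplit : ∫ p in T, (4 * (w p)^2
        + h^2 * ((w p)^2 + ((fderiv ℝ w p (1, 0))^2 + (fderiv ℝ w p (0, 1))^2)))
      = 4 * (∫ p in T, (w p)^2)
        + h^2 * ∫ p in T, ((w p)^2 + ((fderiv ℝ w p (1, 0))^2 + (fderiv ℝ w p (0, 1))^2)) := by
    rw [integral_add (hint1.const_mul 4) (hintX.const_mul (h^2)),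
      integral_const_mul, integral_const_mul]
  have hX0 : 0 ≤ ∫ p in T, ((w p)^2 + ((fderiv ℝ w p (1, 0))^2 + (fderiv ℝ w p (0, 1))^2)) :=
    setIntegral_nonneg hTmeas (fun p _ => by positivity)
  have h10 : 0 ≤ ∫ p in T, (w p)^2 := setIntegral_nonneg hTmeas (fun p _ => by positivity)
  calc ∫ p in dilate h unitEdge, (w p)^2 ∂(μH[1])
      = ∫ x in Ioo (0:ℝ) h, (w (x, 0))^2 := hedge
    _ ≤ ∫ x in Ioo (0:ℝ) h, ∫ s in Ioo (0:ℝ) 1, G x s := hstep1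
    _ = ∫ s in Ioo (0:ℝ) 1, ∫ x in Ioo (0:ℝ) h, G x s := hswap
    _ ≤ ∫ s in Ioo (0:ℝ) 1, q (s * (h / 2)) := hstep3
    _ = (2 / h) * ∫ t in Ioo (0:ℝ) (h / 2), q t := e5
    _ ≤ (2 / h) * ∫ t, q t := mul_le_mul_of_nonneg_left e6 (by positivity)
    _ = (2 / h) * ∫ p in T, Phi h w p := by rw [e7]
    _ ≤ (2 / h) * (4 * (∫ p in T, (w p)^2)
          + h^2 * ∫ p in T, ((w p)^2 + ((fderiv ℝ w p (1, 0))^2 + (fderiv ℝ w p (0, 1))^2))) :=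
        mul_le_mul_of_nonneg_left (hPle.trans_eq hsplit) (by positivity)
    _ ≤ 8 * (h⁻¹ * (∫ p in T, (w p)^2)
          + h * ∫ p in T, ((w p)^2 + ((fderiv ℝ w p (1, 0))^2 + (fderiv ℝ w p (0, 1))^2))) := by
        set A := ∫ p in T, (w p)^2
        set B := ∫ p in T, ((w p)^2 + ((fderiv ℝ w p (1, 0))^2 + (fderiv ℝ w p (0, 1))^2))
        have e : 2 / h * (4 * A + h^2 * B) = 8 * (h⁻¹ * A) + 2 * (h * B) := by
          field_simp; ring
        rw [e]
        have : 2 * (h * B) ≤ 8 * (h * B) := by nlinarith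
        linarith
end
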